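/- Let F be a presheaf of sets on the category of β-sets. For every set S, the natural map F(βS) → eq( F(B(βS)) ⇉ F(B²(βS)) ) is a bijection; i.e., the extension functor composed with restriction is isomorphic to the identity on presheaves on β-sets. -/

import Mathlib

open CategoryTheory Limits Opposite

universe u

attribute [local instance] ConcreteCategory.instFunLike

/-- The category of β-sets: the full subcategory of compact Hausdorff spaces consisting of
Stone–Čech compactifications of discrete spaces. -/
abbrev BSetProp : CompHaus.{u} → Prop := fun X => ∃ S : Type u, Nonempty (X ≃ₜ Ultrafilter S)

abbrev BSet := ObjectProperty.FullSubcategory BSetProp.{u}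

/-- The β-set `βS` of a set `S`. -/
def bset (S : Type u) : BSet.{u} := ⟨CompHaus.of (Ultrafilter S), S, ⟨Homeomorph.refl _⟩⟩

/-- `B(X) = β|X|` as a β-set. -/
noncomputable def bObj (X : CompHaus.{u}) : BSet.{u} :=
  ⟨CompHaus.of (Ultrafilter X), X, ⟨Homeomorph.refl _⟩⟩

/-- The canonical surjection `ξ_X : B(X) → X`. -/
noncomputable def xi (X : CompHaus.{u}) : (bObj X).obj ⟶ X :=
  CompHausLike.ofHom _ ⟨Ultrafilter.extend id, continuous_ultrafilter_extend _⟩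

/-- The fiber product `B(X) ×_X B(X)` along `ξ_X`. -/
def W (X : CompHaus.{u}) : Type u :=
  { p : Ultrafilter X × Ultrafilter X // xi X p.1 = xi X p.2 }

/-- `B²(X) = B(B(X) ×_X B(X))` as a β-set. -/
noncomputable def b2Obj (X : CompHaus.{u}) : BSet.{u} :=
  ⟨CompHaus.of (Ultrafilter (W X)), W X, ⟨Homeomorph.refl _⟩⟩

/-- `π₁ = p₁ ∘ ξ : B²(X) → B(X)`. -/
noncomputable def pi1 (X : CompHaus.{u}) : b2Obj X ⟶ bObj X :=
  ObjectProperty.homMk (CompHausLike.ofHom _ ⟨Ultrafilter.extend (fun w : W X => w.1.1), continuous_ultrafilter_extend _⟩)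

/-- `π₂ = p₂ ∘ ξ : B²(X) → B(X)`. -/
noncomputable def pi2 (X : CompHaus.{u}) : b2Obj X ⟶ bObj X :=
  ObjectProperty.homMk (CompHausLike.ofHom _ ⟨Ultrafilter.extend (fun w : W X => w.1.2), continuous_ultrafilter_extend _⟩)

/-- For a set `S`, the canonical map `ξ_{βS} : B(βS) → βS`, viewed as a morphism of
β-sets. -/
noncomputable def xiBset (S : Type u) : bObj ((bset S).obj) ⟶ bset S :=
  ObjectProperty.homMk (CompHausLike.ofHom _ ⟨Ultrafilter.extend id, continuous_ultrafilter_extend _⟩)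

/-! ξ : B(βS) → βS is a split coequalizer of π₁, π₂ : B²(βS) ⇉ B(βS): ξ has
the continuous section σ extending `s ↦ pure (pure s)`, and the extension
t : B(βS) → B²(βS) of `x ↦ (σ x, pure x)` satisfies π₂ ∘ t = id and π₁ ∘ t = σ ∘ ξ.
Split coequalizers are absolute, so F turns this one into a split equalizer of sets, and a
split equalizer is an equalizer: F(ξ) is injective with image the equalizer of F(π₁), F(π₂). -/

namespace CategoryTheory

def IsSplitCoequalizer.op {C : Type*} [Category C] {X Y Z : C} {f g : X ⟶ Y} {π : Y ⟶ Z}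
    (q : IsSplitCoequalizer f g π) : IsSplitEqualizer f.op g.op π.op where
  leftRetraction := q.rightSection.op
  rightRetraction := q.leftSection.op
  condition := congrArg Quiver.Hom.op q.condition
  ι_leftRetraction := congrArg Quiver.Hom.op q.rightSection_π
  bottom_rightRetraction := congrArg Quiver.Hom.op q.leftSection_bottom
  top_rightRetraction := congrArg Quiver.Hom.op q.leftSection_top

variable {E X Y : Type u} {f g : X ⟶ Y} {ι : E ⟶ X}

theorem IsSplitEqualizer.injective_ι (q : IsSplitEqualizer f g ι) : Function.Injective ι :=
  (mono_iff_injective ι).1 (Fork.IsLimit.mono q.isEqualizer)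

theorem IsSplitEqualizer.eq_iff_exists_ι_eq (q : IsSplitEqualizer f g ι) (x : X) :
    f x = g x ↔ ∃ e, ι e = x :=
  ⟨fun h => (Types.unique_of_type_equalizer ι q.condition q.isEqualizer x h).exists,
    fun ⟨e, he⟩ => he ▸ ConcreteCategory.congr_hom q.condition e⟩

end CategoryTheory

lemma continuous_ultrafilter_extend_comp {α β γ : Type*} [TopologicalSpace γ] [T2Space γ]
    [CompactSpace γ] {f : α → Ultrafilter β} {g : β → γ} :
    Continuous (Ultrafilter.extend g ∘ Ultrafilter.extend f) :=
  (continuous_ultrafilter_extend g).comp (continuous_ultrafilter_extend f)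

lemma extend_id_comp_extend_fst (X : CompHaus.{u}) :
    Ultrafilter.extend (id : X → X) ∘ Ultrafilter.extend (fun w : W X => w.1.1) =
      Ultrafilter.extend id ∘ Ultrafilter.extend (fun w : W X => w.1.2) :=
  denseRange_pure.equalizer continuous_ultrafilter_extend_comp continuous_ultrafilter_extend_comp
    (funext fun w => by simp only [Function.comp_apply, ultrafilter_extend_pure]; exact w.2)

section Splitting

variable (S : Type u)

noncomputable def xiSection : Ultrafilter S → Ultrafilter (Ultrafilter S) :=
  Ultrafilter.extend fun s => pure (pure s)

lemma extend_id_comp_xiSection : Ultrafilter.extend id ∘ xiSection S = id :=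
  denseRange_pure.equalizer continuous_ultrafilter_extend_comp continuous_id
    (funext fun s => by simp only [Function.comp_apply, xiSection, ultrafilter_extend_pure, id])

noncomputable def pi2Section : Ultrafilter (Ultrafilter S) → Ultrafilter (W (bset S).obj) :=
  Ultrafilter.extend fun x : Ultrafilter S => pure ⟨(xiSection S x, pure x),
    (congrFun (extend_id_comp_xiSection S) x).trans (ultrafilter_extend_pure id x).symm⟩

lemma extend_fst_comp_pi2Section :
    Ultrafilter.extend (fun w : W (bset S).obj => w.1.1) ∘ pi2Section S =
      xiSection S ∘ Ultrafilter.extend id :=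
  denseRange_pure.equalizer continuous_ultrafilter_extend_comp continuous_ultrafilter_extend_comp
    (funext fun x => by
      simp only [Function.comp_apply, pi2Section, ultrafilter_extend_pure]
      exact (ultrafilter_extend_pure _ _).trans
        (congrArg (xiSection S) (ultrafilter_extend_pure id x).symm))

lemma extend_snd_comp_pi2Section :
    Ultrafilter.extend (fun w : W (bset S).obj => w.1.2) ∘ pi2Section S = id :=
  denseRange_pure.equalizer continuous_ultrafilter_extend_comp continuous_id
    (funext fun x => by
      simp only [Function.comp_apply, pi2Section, ultrafilter_extend_pure]
      exact ultrafilter_extend_pure _ _)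

noncomputable def isSplitCoequalizerXiBset :
    IsSplitCoequalizer (pi1 (bset S).obj) (pi2 (bset S).obj) (xiBset S) where
  rightSection :=
    ObjectProperty.homMk (CompHausLike.ofHom _ ⟨xiSection S, continuous_ultrafilter_extend _⟩)
  leftSection :=
    ObjectProperty.homMk (CompHausLike.ofHom _ ⟨pi2Section S, continuous_ultrafilter_extend _⟩)
  condition := by ext b; exact congrFun (extend_id_comp_extend_fst _) b
  rightSection_π := by ext x; exact congrFun (extend_id_comp_xiSection S) x
  leftSection_bottom := by ext b; exact congrFun (extend_snd_comp_pi2Section S) b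
  leftSection_top := by ext b; exact congrFun (extend_fst_comp_pi2Section S) b

end Splitting

/-- For any presheaf `F` on β-sets and any set `S`, the natural map
`F(βS) → eq( F(B(βS)) ⇉ F(B²(βS)) )` induced by `ξ_{βS}` is a bijection; i.e. the
extension functor composed with restriction is isomorphic to the identity. -/
theorem stmt17 (F : BSet.{u}ᵒᵖ ⥤ Type u) (S : Type u) :
    Function.Injective (F.map (xiBset S).op) ∧
    ∀ y : F.obj (op (bObj ((bset S).obj))),
      (F.map (pi1 ((bset S).obj)).op y = F.map (pi2 ((bset S).obj)).op y
        ↔ ∃ x, F.map (xiBset S).op x = y) :=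
  let q := (isSplitCoequalizerXiBset S).op.map F
  ⟨q.injective_ι, q.eq_iff_exists_ι_eq⟩
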